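/- arXiv:2412.16865 — 2 statements merged into one kernel-verified Lean document; each statement's English description precedes it below -/
import Mathlib

section
/- If A is a Lagrangian (order-n subgroup) of (Z/nZ)² and (A,B) is a tiling pair, then (A,B) is also a symplectic spectral pair: |A| = |B| and ΔB ⊆ Z(1̂_A^{sym}), so that {e^{2πi⟨a,b⟩_s/n}}_{b∈B} is an orthogonal basis of functions on A. -/
/-!
Since `A` tiles with `B`, the addition map `A × B → (ℤ/n)²` is a bijection, so `|B| = n`, and
distinct `b, b' ∈ B` have `b - b' ∉ A`. For `ξ ∉ A` the sum `sFsub A ξ` is the sum of the character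
`a ↦ e(⟨a, ξ⟩_s / n)` of `A`, so it vanishes once this character is nontrivial, i.e. once the
symplectic orthogonal of `A` lies in `A`. To see this, lift to the preimage `L ⊆ ℤ²` of `A`:
it has index `n`, hence a basis `v, w` with `det (v, w) = ± n`, and Cramer's rule
`det (v, w) • z = det (z, w) • v + det (v, z) • w` shows that every `z` with `n ∣ det (x, z)` for all
`x ∈ L` lies in `L`.
-/

open Complex
open scoped Classical

abbrev G (n : ℕ) := ZMod n × ZMod n

def symp {n : ℕ} (x y : G n) : ZMod n := x.1 * y.2 - x.2 * y.1

/-- Symplectic Fourier transform of the indicator of a subgroup `A` at `ξ`. -/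
noncomputable def sFsub {n : ℕ} [NeZero n] (A : AddSubgroup (G n)) (ξ : G n) : ℂ :=
  ∑ a : A, Complex.exp (2 * Real.pi * Complex.I * ((symp (a : G n) ξ).val : ℂ) / (n : ℂ))

def IsTilingPairSub {n : ℕ} (A : AddSubgroup (G n)) (B : Finset (G n)) : Prop :=
  ∀ g : G n, ∃! q : G n × G n, (q.1 ∈ A ∧ q.2 ∈ B) ∧ q.1 + q.2 = g

open Module

section Cross

variable {R : Type*} [CommRing R]

def cross (x y : R × R) : R := x.1 * y.2 - x.2 * y.1

lemma cross_smul_eq_add (v w z : R × R) :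
    cross v w • z = cross z w • v + cross v z • w := by
  ext <;> simp only [cross, Prod.smul_fst, Prod.smul_snd, Prod.fst_add, Prod.snd_add,
    smul_eq_mul] <;> ring

lemma map_cross {S : Type*} [CommRing S] (f : R →+* S) (x y : R × R) :
    f (cross x y) = cross (Prod.map f f x) (Prod.map f f y) := by
  simp [cross]

lemma Module.Basis.finTwoProd_det (v : Fin 2 → R × R) :
    (Basis.finTwoProd R).det v = cross (v 0) (v 1) := by
  rw [Basis.det_apply, Matrix.det_fin_two, cross]
  simp only [Basis.toMatrix_apply, Basis.coe_finTwoProd_repr, Matrix.cons_val_zero,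
    Matrix.cons_val_one]
  ring

end Cross

lemma AddSubgroup.exists_basis_natAbs_cross_eq_index (L : AddSubgroup (ℤ × ℤ))
    [L.FiniteIndex] : ∃ b : Basis (Fin 2) ℤ L, (cross (b 0 : ℤ × ℤ) (b 1)).natAbs = L.index := by
  have hrank : finrank ℤ L = 2 := by
    rw [AddSubgroup.finrank_eq_of_finiteIndex, finrank_prod, finrank_self]
  let b := Module.finBasisOfFinrankEq ℤ L hrank
  exact ⟨b, by rw [L.index_eq_natAbs_det (Basis.finTwoProd ℤ) b, Basis.finTwoProd_det]⟩

lemma AddSubgroup.mem_of_index_dvd_cross (L : AddSubgroup (ℤ × ℤ)) [L.FiniteIndex]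
    {z : ℤ × ℤ} (hz : ∀ x ∈ L, (L.index : ℤ) ∣ cross x z) : z ∈ L := by
  obtain ⟨b, hb⟩ := L.exists_basis_natAbs_cross_eq_index
  set v : ℤ × ℤ := ↑(b 0)
  set w : ℤ × ℤ := ↑(b 1)
  set m : ℤ := (L.index : ℤ)
  obtain ⟨k, hk⟩ : m ∣ cross z w := by
    have : cross z w = -cross w z := by simp only [cross]; ring
    exact this ▸ (hz w (b 1).2).neg_right
  obtain ⟨l, hl⟩ := hz v (b 0).2
  have hm : m ≠ 0 := Nat.cast_ne_zero.mpr AddSubgroup.FiniteIndex.index_ne_zero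
  have hz_eq : z = (cross v w).sign • (k • v + l • w) := by
    apply smul_right_injective (ℤ × ℤ) hm
    calc m • z = ((cross v w).sign * cross v w) • z := by
            rw [Int.sign_mul_self_eq_natAbs, hb]
      _ = (cross v w).sign • m • (k • v + l • w) := by
            rw [mul_smul, cross_smul_eq_add, hk, hl]
            simp only [mul_smul, smul_add]
      _ = m • ((cross v w).sign • (k • v + l • w)) := smul_comm _ _ _
  rw [hz_eq]
  exact L.zsmul_mem (L.add_mem (L.zsmul_mem (b 0).2 k) (L.zsmul_mem (b 1).2 l)) _

lemma mem_of_forall_symp_eq_zero {n : ℕ} [NeZero n] (A : AddSubgroup (G n))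
    (hA : Nat.card A = n) {ξ : G n} (hξ : ∀ a ∈ A, symp a ξ = 0) : ξ ∈ A := by
  let π : ℤ × ℤ →+ G n := (Int.castAddHom (ZMod n)).prodMap (Int.castAddHom (ZMod n))
  have hπ : Function.Surjective π :=
    ZMod.intCast_surjective.prodMap ZMod.intCast_surjective
  have hindex : (A.comap π).index = n := by
    have h := A.index_mul_card
    rw [hA, Nat.card_prod, Nat.card_zmod] at h
    rw [AddSubgroup.index_comap_of_surjective A hπ]
    exact Nat.eq_of_mul_eq_mul_right (NeZero.pos n) h
  have : (A.comap π).FiniteIndex := ⟨hindex.trans_ne (NeZero.ne n)⟩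
  obtain ⟨z, rfl⟩ := hπ ξ
  refine (A.comap π).mem_of_index_dvd_cross fun x hx => ?_
  rw [hindex, ← ZMod.intCast_zmod_eq_zero_iff_dvd, ← eq_intCast (Int.castRingHom (ZMod n)),
    map_cross]
  exact hξ _ hx

lemma sFsub_eq_zero_of_symp_ne_zero {n : ℕ} [NeZero n] (A : AddSubgroup (G n)) {ξ a : G n}
    (ha : a ∈ A) (hξ : symp a ξ ≠ 0) : sFsub A ξ = 0 := by
  let sympξ : G n →+ ZMod n := AddMonoidHom.mk' (symp · ξ) fun x y => by
    simp only [symp, Prod.fst_add, Prod.snd_add]; ring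
  let ψ : AddChar A ℂ := (ZMod.stdAddChar (N := n)).compAddMonoidHom (sympξ.comp A.subtype)
  have hψ : sFsub A ξ = ∑ a, ψ a := by
    simp [sFsub, ψ, sympξ, ZMod.stdAddChar_apply, ZMod.toCircle_apply]
  rw [hψ, AddChar.sum_eq_zero_iff_ne_zero, AddChar.ne_zero_iff]
  refine ⟨⟨a, ha⟩, fun h => hξ ?_⟩
  rw [← (ZMod.stdAddChar (N := n)).map_zero_eq_one] at h
  exact ZMod.injective_stdAddChar h

lemma sFsub_eq_zero_of_notMem {n : ℕ} [NeZero n] (A : AddSubgroup (G n)) (hA : Nat.card A = n)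
    {ξ : G n} (hξ : ξ ∉ A) : sFsub A ξ = 0 := by
  obtain ⟨a, ha, hsymp⟩ : ∃ a ∈ A, symp a ξ ≠ 0 := by
    by_contra! h
    exact hξ (mem_of_forall_symp_eq_zero A hA h)
  exact sFsub_eq_zero_of_symp_ne_zero A ha hsymp

namespace IsTilingPairSub

variable {n : ℕ} {A : AddSubgroup (G n)} {B : Finset (G n)}

lemma bijective_add (hT : IsTilingPairSub A B) :
    Function.Bijective fun p : A × B => (p.1 : G n) + p.2 := by
  refine ⟨fun ⟨a, b⟩ ⟨a', b'⟩ h => ?_, fun g => ?_⟩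
  · have := (hT (a + b)).unique (y₁ := (a, b)) (y₂ := (a', b'))
      ⟨⟨a.2, b.2⟩, rfl⟩ ⟨⟨a'.2, b'.2⟩, h.symm⟩
    simp only [Prod.mk.injEq] at this
    exact Prod.ext (Subtype.ext this.1) (Subtype.ext this.2)
  · obtain ⟨q, ⟨⟨ha, hb⟩, hq⟩, -⟩ := hT g
    exact ⟨(⟨q.1, ha⟩, ⟨q.2, hb⟩), hq⟩

lemma card_mul_card (hT : IsTilingPairSub A B) : Nat.card A * B.card = Nat.card (G n) := by
  rw [← Nat.card_eq_of_bijective _ hT.bijective_add, Nat.card_prod, Nat.card_eq_finsetCard]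

lemma sub_notMem (hT : IsTilingPairSub A B) {b b' : G n} (hb : b ∈ B) (hb' : b' ∈ B)
    (hne : b ≠ b') : b - b' ∉ A := fun h => hne <| by
  have := (hT b).unique (y₁ := (b - b', b')) (y₂ := (0, b))
    ⟨⟨h, hb'⟩, sub_add_cancel b b'⟩ ⟨⟨A.zero_mem, hb⟩, zero_add b⟩
  simp only [Prod.mk.injEq, sub_eq_zero] at this
  exact this.1

end IsTilingPairSub

/-- If `A` is a Lagrangian (order-`n` subgroup) of `(Z/nZ)²` and `(A,B)` is a tiling pair,
then `(A,B)` is a symplectic spectral pair: `|A| = |B|` and `ΔB ⊆ Z(1̂_A^{sym})`. -/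
theorem stmt16 {n : ℕ} [NeZero n] (A : AddSubgroup (G n)) (hA : Nat.card A = n)
    (B : Finset (G n)) (hT : IsTilingPairSub A B) :
    Nat.card A = B.card ∧ ∀ b ∈ B, ∀ b' ∈ B, b ≠ b' → sFsub A (b - b') = 0 := by
  have hB : B.card = n := by
    have h := hT.card_mul_card
    rw [hA, Nat.card_prod, Nat.card_zmod] at h
    exact Nat.eq_of_mul_eq_mul_left (NeZero.pos n) h
  exact ⟨hA.trans hB.symm, fun b hb b' hb' hne =>
    sFsub_eq_zero_of_notMem A hA (hT.sub_notMem hb hb' hne)⟩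
end

section
/- If A is a Lagrangian (order-n subgroup) of (Z/nZ)² and (A,S) is a symplectic spectral pair with ΔS ⊆ Z(1̂_A^{sym}), then (A,S) is a tiling pair of (Z/nZ)². -/
open Complex
open scoped Classical

lemma symp_expand {n : ℕ} (u v : G n) (hv1 : v.1 = 0) (hzero : u.1 * v.2 = 0)
    (s t s' t' : ℤ) : symp (s • u + t • v) (s' • u + t' • v) = 0 := by
  rcases u with ⟨u1, u2⟩
  rcases v with ⟨v1, v2⟩
  have hv1' : v1 = 0 := hv1
  have hz : u1 * v2 = 0 := hzero
  subst hv1'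
  simp only [Prod.smul_mk, Prod.mk_add_mk, symp, smul_zero, zsmul_eq_mul]
  linear_combination ((s : ZMod n) * (t' : ZMod n) - (t : ZMod n) * (s' : ZMod n)) * hz

/-- Every order-`n` subgroup of `(ZMod n)²` is isotropic for the symplectic form. -/
lemma isotropic {n : ℕ} [NeZero n] (A : AddSubgroup (G n)) (hA : Nat.card A = n) :
    ∀ a ∈ A, ∀ b ∈ A, symp a b = 0 := by
  classical
  -- the projection to the first coordinate, restricted to A
  set f : A →+ ZMod n := (AddMonoidHom.fst (ZMod n) (ZMod n)).comp A.subtype with hf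
  -- the second-coordinate map on the kernel of f
  set h : f.ker →+ ZMod n :=
    (AddMonoidHom.snd (ZMod n) (ZMod n)).comp (A.subtype.comp f.ker.subtype) with hh
  have hinj : Function.Injective h := by
    intro x y hxy
    have hx1 : ((x : A) : G n).1 = 0 := x.2
    have hy1 : ((y : A) : G n).1 = 0 := y.2
    apply Subtype.ext; apply Subtype.ext
    exact Prod.ext (hx1.trans hy1.symm) hxy
  set m₁ : ℕ := Nat.card f.range with hm₁
  set m₂ : ℕ := Nat.card f.ker with hm₂
  have hmn : m₁ * m₂ = n := by
    have h1 : Nat.card A = Nat.card (A ⧸ f.ker) * Nat.card f.ker :=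
      AddSubgroup.card_eq_card_quotient_mul_card_addSubgroup f.ker
    have h2 : Nat.card (A ⧸ f.ker) = Nat.card f.range :=
      Nat.card_congr (QuotientAddGroup.quotientKerEquivRange f).toEquiv
    rw [← hA, h1, h2]
  have hm₁0 : m₁ ≠ 0 := fun h0 => NeZero.ne n (by rw [← hmn, h0, zero_mul])
  have hm₂0 : m₂ ≠ 0 := fun h0 => NeZero.ne n (by rw [← hmn, h0, mul_zero])
  -- generator of the range of f
  obtain ⟨g₀, hg₀⟩ := IsAddCyclic.exists_generator (α := f.range)
  -- generator of the range of h
  have hcards : Nat.card h.range = m₂ := by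
    rw [hm₂]
    exact (Nat.card_congr (AddMonoidHom.ofInjective hinj).toEquiv).symm
  obtain ⟨k₀, hk₀⟩ := IsAddCyclic.exists_generator (α := h.range)
  -- the two privileged elements u, v of A
  obtain ⟨a₀, ha₀⟩ : ∃ a₀ : A, f a₀ = (g₀ : ZMod n) := g₀.2
  obtain ⟨b₀, hb₀⟩ : ∃ b₀ : f.ker, h b₀ = (k₀ : ZMod n) := k₀.2
  set u : G n := ((a₀ : A) : G n) with hu
  set v : G n := (((b₀ : f.ker) : A) : G n) with hv
  have hvmem : v ∈ A := ((b₀ : f.ker) : A).2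
  have humem : u ∈ A := (a₀ : A).2
  have hu1 : u.1 = (g₀ : ZMod n) := ha₀
  have hv1 : v.1 = 0 := b₀.2
  have hv2 : v.2 = (k₀ : ZMod n) := hb₀
  -- torsion facts
  have hg₀tor : (m₁ : ℕ) • (g₀ : ZMod n) = 0 := by
    have : m₁ • g₀ = 0 := by
      rw [hm₁]; exact card_nsmul_eq_zero'
    calc (m₁ : ℕ) • (g₀ : ZMod n) = ((m₁ • g₀ : f.range) : ZMod n) := rfl
    _ = 0 := by rw [this]; rfl
  have hk₀tor : (m₂ : ℕ) • (k₀ : ZMod n) = 0 := by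
    have : m₂ • k₀ = 0 := by
      rw [← hcards]; exact card_nsmul_eq_zero'
    calc (m₂ : ℕ) • (k₀ : ZMod n) = ((m₂ • k₀ : h.range) : ZMod n) := rfl
    _ = 0 := by rw [this]; rfl
  -- the key product vanishing
  have hprod : u.1 * v.2 = 0 := by
    rw [hu1, hv2]
    have hd1 : (n : ℕ) ∣ m₁ * ((g₀ : ZMod n)).val := by
      rw [← ZMod.natCast_eq_zero_iff]
      push_cast
      rw [ZMod.natCast_val, ZMod.cast_id]
      rw [nsmul_eq_mul] at hg₀tor
      exact_mod_cast hg₀tor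
    have hd2 : (n : ℕ) ∣ m₂ * ((k₀ : ZMod n)).val := by
      rw [← ZMod.natCast_eq_zero_iff]
      push_cast
      rw [ZMod.natCast_val, ZMod.cast_id]
      rw [nsmul_eq_mul] at hk₀tor
      exact_mod_cast hk₀tor
    have hd1' : m₂ ∣ ((g₀ : ZMod n)).val := by
      have hb : m₁ * m₂ ∣ m₁ * ((g₀ : ZMod n)).val := by rw [hmn]; exact hd1
      exact (Nat.mul_dvd_mul_iff_left (Nat.pos_of_ne_zero hm₁0)).mp hb
    have hd2' : m₁ ∣ ((k₀ : ZMod n)).val := by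
      have hb : m₂ * m₁ ∣ m₂ * ((k₀ : ZMod n)).val := by rw [mul_comm m₂ m₁, hmn]; exact hd2
      exact (Nat.mul_dvd_mul_iff_left (Nat.pos_of_ne_zero hm₂0)).mp hb
    have : (n : ℕ) ∣ ((g₀ : ZMod n)).val * ((k₀ : ZMod n)).val := by
      have hb : m₂ * m₁ ∣ ((g₀ : ZMod n)).val * ((k₀ : ZMod n)).val :=
        Nat.mul_dvd_mul hd1' hd2'
      rw [mul_comm m₂ m₁, hmn] at hb
      exact hb
    have hcast : (((((g₀ : ZMod n)).val * (((k₀ : ZMod n)).val) : ℕ)) : ZMod n) = 0 :=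
      (ZMod.natCast_eq_zero_iff _ n).mpr this
    rw [Nat.cast_mul, ZMod.natCast_val, ZMod.cast_id, ZMod.natCast_val, ZMod.cast_id] at hcast
    exact hcast
  -- decomposition of an arbitrary element of A
  have hdecomp : ∀ a ∈ A, ∃ s t : ℤ, a = s • u + t • v := by
    intro a ha
    set x : A := ⟨a, ha⟩ with hx
    obtain ⟨s, hs⟩ := AddSubgroup.mem_zmultiples_iff.mp (hg₀ ⟨f x, ⟨x, rfl⟩⟩)
    have hfs : f (x - s • a₀) = 0 := by
      have : f x = s • (g₀ : ZMod n) := by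
        have := congrArg (fun z : f.range => (z : ZMod n)) hs
        simpa using this.symm
      rw [map_sub, map_zsmul, ha₀, this, sub_self]
    have hker : x - s • a₀ ∈ f.ker := hfs
    obtain ⟨t, ht⟩ := AddSubgroup.mem_zmultiples_iff.mp
      (hk₀ ⟨h ⟨x - s • a₀, hker⟩, ⟨⟨x - s • a₀, hker⟩, rfl⟩⟩)
    have hht : h ⟨x - s • a₀, hker⟩ = t • (k₀ : ZMod n) := by
      have := congrArg (fun z : h.range => (z : ZMod n)) ht
      simpa using this.symm
    refine ⟨s, t, ?_⟩
    have hw : ((x - s • a₀ : A) : G n) = t • v := by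
      apply Prod.ext
      · show ((x - s • a₀ : A) : G n).1 = (t • v).1
        have h1 : ((x - s • a₀ : A) : G n).1 = 0 := hker
        have h2 : (t • v).1 = t • v.1 := rfl
        rw [h1, h2, hv1, smul_zero]
      · show ((x - s • a₀ : A) : G n).2 = (t • v).2
        have h2 : (t • v).2 = t • v.2 := rfl
        rw [h2, hv2]
        exact hht.trans rfl
    have hxsplit : x = s • a₀ + (x - s • a₀) := by abel
    have hfinal : ((x : A) : G n) = s • u + t • v := by
      rw [hxsplit]
      rw [show ((s • a₀ + (x - s • a₀) : A) : G n)
            = s • ((a₀ : A) : G n) + ((x - s • a₀ : A) : G n) from rfl, hw]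
    exact hfinal
  -- conclude by bilinearity
  intro a ha b hb
  obtain ⟨s, t, hab⟩ := hdecomp a ha
  obtain ⟨s', t', hbb⟩ := hdecomp b hb
  rw [hab, hbb]
  exact symp_expand u v hv1 hprod s t s' t'

/-- If `A` is a Lagrangian (order-`n` subgroup) of `(Z/nZ)²` and `(A,S)` is a symplectic
spectral pair with `ΔS ⊆ Z(1̂_A^{sym})`, then `(A,S)` is a tiling pair. -/
theorem stmt17 {n : ℕ} [NeZero n] (A : AddSubgroup (G n)) (hA : Nat.card A = n)
    (S : Finset (G n)) (hcard : Nat.card A = S.card)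
    (hspec : ∀ s ∈ S, ∀ s' ∈ S, s ≠ s' → sFsub A (s - s') = 0) :
    IsTilingPairSub A S := by
  classical
  have iso := isotropic A hA
  -- the sum evaluates to n on differences lying in A
  have hval : ∀ ξ : G n, ξ ∈ A → sFsub A ξ = (n : ℂ) := by
    intro ξ hξ
    unfold sFsub
    have : ∀ a : A, Complex.exp (2 * Real.pi * Complex.I *
        ((symp (a : G n) ξ).val : ℂ) / (n : ℂ)) = 1 := by
      intro a
      rw [iso (a : G n) a.2 ξ hξ]
      simp
    rw [Finset.sum_congr rfl (fun a _ => this a), Finset.sum_const, Finset.card_univ,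
      nsmul_eq_mul, mul_one, ← Nat.card_eq_fintype_card, hA]
  -- the addition map is injective
  set e : A × {x // x ∈ S} → G n := fun p => (p.1 : G n) + (p.2 : G n) with he
  have einj : Function.Injective e := by
    rintro ⟨a, s⟩ ⟨a', s'⟩ hsum
    simp only [he] at hsum
    by_cases hss : (s : G n) = (s' : G n)
    · have : (a : G n) = (a' : G n) := by
        apply add_right_cancel (b := (s : G n))
        rw [hsum, hss]
      exact Prod.ext (Subtype.ext this) (Subtype.ext hss)
    · exfalso
      have hmem : (s : G n) - (s' : G n) ∈ A := by
        have : (s : G n) - (s' : G n) = (a' : G n) - (a : G n) := by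
          have := hsum
          linear_combination this
        rw [this]
        exact A.sub_mem a'.2 a.2
      have h0 : sFsub A ((s : G n) - (s' : G n)) = 0 := hspec _ s.2 _ s'.2 hss
      rw [hval _ hmem] at h0
      exact Nat.cast_ne_zero.mpr (NeZero.ne n) h0
  -- cardinalities agree
  have hcards : Fintype.card (A × {x // x ∈ S}) = Fintype.card (G n) := by
    rw [Fintype.card_prod, Fintype.card_coe, ← hcard, ← Nat.card_eq_fintype_card, hA]
    show n * n = Fintype.card (ZMod n × ZMod n)
    rw [Fintype.card_prod, ZMod.card]
  have ebij : Function.Bijective e :=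
    (Fintype.bijective_iff_injective_and_card e).mpr ⟨einj, hcards⟩
  intro g
  obtain ⟨⟨a, s⟩, hp⟩ := ebij.surjective g
  refine ⟨((a : G n), (s : G n)), ⟨⟨a.2, s.2⟩, hp⟩, ?_⟩
  rintro ⟨q1, q2⟩ ⟨⟨hq1, hq2⟩, hqsum⟩
  have : e (⟨q1, hq1⟩, ⟨q2, hq2⟩) = e (a, s) := by
    simp only [he]
    exact hqsum.trans hp.symm
  have heq := einj this
  have h1 : q1 = (a : G n) := congrArg (fun p => ((p.1 : G n)) ) heq
  have h2 : q2 = (s : G n) := congrArg (fun p => ((p.2 : G n)) ) heq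
  exact Prod.ext h1 h2
end
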